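/- arXiv:1811.03475 — 2 statements merged into one kernel-verified Lean document; each statement's English description precedes it below -/
import Mathlib

section
/- For every real ν and α, every n ∈ ℕ and every x > 0, the functions S_n^{ν,α} satisfy the recurrence S_{n+1}^{ν,α}(x) = (2n+1+ν+α) S_n^{ν,α}(x) − n (n+ν+α) S_{n−1}^{ν,α}(x) − x · S_n^{ν+1,α−1}(x). -/
open MeasureTheory Real Set

/-- The scaled Macdonald function `ρ_ν(x) = ∫₀^∞ t^(ν-1) e^(-t - x/t) dt`. -/
noncomputable def rho (ν : ℝ) (x : ℝ) : ℝ :=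
  ∫ t in Ioi (0:ℝ), t ^ (ν - 1) * Real.exp (-t - x / t)

/-- `S_n^{ν,α}(x) = dⁿ/dxⁿ [ x^{n+α} ρ_ν(x) ]`. -/
noncomputable def S (n : ℕ) (ν α : ℝ) (x : ℝ) : ℝ :=
  deriv^[n] (fun y : ℝ => y ^ ((n : ℝ) + α) * rho ν y) x

open Filter Topology
open scoped ContDiff

/-!
Differentiating under the integral sign gives `ρ_ν' = -ρ_{ν-1}`, and integrating
`(t^ν e^{-t-x/t})'` over `(0, ∞)` gives the three-term relation `ρ_{ν+1} = ν ρ_ν + x ρ_{ν-1}`.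
Together they yield `(x^c ρ_ν)' = (c+ν) x^{c-1} ρ_ν - x^{c-1} ρ_{ν+1}`. Writing
`x^{n+1+α} ρ_ν = x · x^{n+α} ρ_ν` and `x^{n+α} ρ_ν = x · x^{n+α-1} ρ_ν`, the Leibniz rule
`(x f)^{(k)} = x f^{(k)} + k f^{(k-1)}` expresses `S_{n+1}` and `S_n` through `(x^{n+α-1} ρ_ν)^{(n)}`,
and eliminating it gives the recurrence.
-/

lemma continuousOn_rpow_mul_exp_neg_sub_div (a c : ℝ) :
    ContinuousOn (fun t : ℝ => t ^ a * exp (-t - c / t)) (Ioi 0) := by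
  intro t ht
  have ht : t ≠ 0 := (mem_Ioi.1 ht).ne'
  exact ((continuousAt_rpow_const t a (Or.inl ht)).mul
    (continuous_exp.continuousAt.comp
      (continuousAt_id.neg.sub (continuousAt_const.div continuousAt_id ht)))).continuousWithinAt

lemma exp_neg_div_le_factorial_div_pow_mul_pow {c t : ℝ} (hc : 0 < c) (ht : 0 < t) (m : ℕ) :
    exp (-(c / t)) ≤ m.factorial / c ^ m * t ^ m := by
  have hpos : 0 < (c / t) ^ m / m.factorial := by positivity
  calc exp (-(c / t)) = (exp (c / t))⁻¹ := exp_neg _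
    _ ≤ ((c / t) ^ m / m.factorial)⁻¹ :=
      inv_anti₀ hpos (pow_div_factorial_le_exp _ (div_pos hc ht).le m)
    _ = m.factorial / c ^ m * t ^ m := by rw [div_pow]; field_simp

lemma integrableOn_rpow_mul_exp_neg_sub_div (a : ℝ) {c : ℝ} (hc : 0 < c) :
    IntegrableOn (fun t : ℝ => t ^ a * exp (-t - c / t)) (Ioi 0) := by
  obtain ⟨m, hm⟩ : ∃ m : ℕ, -a < m := exists_nat_gt (-a)
  have hGamma : IntegrableOn (fun t : ℝ => m.factorial / c ^ m * (exp (-t) * t ^ (a + m)))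
      (Ioi 0) := by
    simpa [IntegrableOn] using (GammaIntegral_convergent (s := a + m + 1) (by linarith)).const_mul
      ((m.factorial : ℝ) / c ^ m)
  -- `e^(-c/t) ≤ m! t^m / c^m` trades the singularity at `0` for a convergent Gamma integrand.
  refine hGamma.mono' ((continuousOn_rpow_mul_exp_neg_sub_div a c).aestronglyMeasurable
    measurableSet_Ioi) ((ae_restrict_iff' measurableSet_Ioi).2 (.of_forall fun t ht => ?_))
  have ht : 0 < t := ht
  rw [Real.norm_of_nonneg (by positivity), sub_eq_add_neg, exp_add, rpow_add ht, rpow_natCast]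
  calc t ^ a * (exp (-t) * exp (-(c / t)))
      ≤ t ^ a * (exp (-t) * (m.factorial / c ^ m * t ^ m)) := by
        gcongr; exact exp_neg_div_le_factorial_div_pow_mul_pow hc ht m
    _ = m.factorial / c ^ m * (exp (-t) * (t ^ a * t ^ m)) := by ring

lemma hasDerivAt_rho (ν : ℝ) {x : ℝ} (hx : 0 < x) :
    HasDerivAt (rho ν) (-rho (ν - 1) x) x := by
  have hx2 : 0 < x / 2 := half_pos hx
  have key := hasDerivAt_integral_of_dominated_loc_of_deriv_le (μ := volume.restrict (Ioi 0))
    (F := fun y t => t ^ (ν - 1) * exp (-t - y / t))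
    (F' := fun y t => -(t ^ (ν - 1 - 1) * exp (-t - y / t)))
    (bound := fun t => t ^ (ν - 1 - 1) * exp (-t - x / 2 / t))
    (Metric.ball_mem_nhds x hx2)
    (.of_forall fun y => (continuousOn_rpow_mul_exp_neg_sub_div (ν - 1) y).aestronglyMeasurable
      measurableSet_Ioi)
    (integrableOn_rpow_mul_exp_neg_sub_div (ν - 1) hx)
    ((continuousOn_rpow_mul_exp_neg_sub_div (ν - 1 - 1) x).aestronglyMeasurable
      measurableSet_Ioi).neg
    ?bound (integrableOn_rpow_mul_exp_neg_sub_div (ν - 1 - 1) hx2) ?deriv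
  · rw [integral_neg] at key
    exact key.2
  case bound =>
    refine (ae_restrict_iff' measurableSet_Ioi).2 (.of_forall fun t (ht : 0 < t) y hy => ?_)
    have hy : x / 2 ≤ y := by
      linarith [(abs_lt.1 (mem_ball_iff_norm.1 hy)).1]
    rw [norm_neg, Real.norm_of_nonneg (by positivity)]
    gcongr
  case deriv =>
    refine (ae_restrict_iff' measurableSet_Ioi).2 (.of_forall fun t (ht : 0 < t) y _ => ?_)
    refine ((((hasDerivAt_id y).div_const t).const_sub (-t)).exp.const_mul
      (t ^ (ν - 1))).congr_deriv ?_
    rw [rpow_sub_one ht.ne' (ν - 1)]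
    simp only [id]
    ring

lemma tendsto_rpow_mul_exp_neg_sub_div_atTop (a : ℝ) {c : ℝ} (hc : 0 ≤ c) :
    Tendsto (fun t : ℝ => t ^ a * exp (-t - c / t)) atTop (𝓝 0) := by
  refine tendsto_of_tendsto_of_tendsto_of_le_of_le' tendsto_const_nhds
    (by simpa using tendsto_rpow_mul_exp_neg_mul_atTop_nhds_zero a 1 one_pos) ?_ ?_
  · filter_upwards [eventually_gt_atTop 0] with t ht using by positivity
  · filter_upwards [eventually_gt_atTop 0] with t ht
    gcongr
    linarith [div_nonneg hc ht.le]

lemma tendsto_rpow_mul_exp_neg_sub_div_nhdsGT_zero (a : ℝ) {c : ℝ} (hc : 0 < c) :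
    Tendsto (fun t : ℝ => t ^ a * exp (-t - c / t)) (𝓝[>] 0) (𝓝 0) := by
  have hinv : Tendsto (fun t : ℝ => t⁻¹ ^ (-a) * exp (-c * t⁻¹)) (𝓝[>] 0) (𝓝 0) :=
    (tendsto_rpow_mul_exp_neg_mul_atTop_nhds_zero (-a) c hc).comp tendsto_inv_nhdsGT_zero
  refine tendsto_of_tendsto_of_tendsto_of_le_of_le' tendsto_const_nhds hinv ?_ ?_
  · filter_upwards [self_mem_nhdsWithin] with t (ht : 0 < t) using by positivity
  · filter_upwards [self_mem_nhdsWithin] with t (ht : 0 < t)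
    rw [inv_rpow ht.le, rpow_neg ht.le, inv_inv, neg_mul, ← div_eq_mul_inv]
    gcongr
    linarith

lemma rho_add_one (ν : ℝ) {x : ℝ} (hx : 0 < x) :
    rho (ν + 1) x = ν * rho ν x + x * rho (ν - 1) x := by
  set E : ℝ → ℝ := fun t => exp (-t - x / t)
  have hu : ∀ t ∈ Ioi (0 : ℝ), HasDerivAt (fun t => t ^ ν) (ν * t ^ (ν - 1)) t :=
    fun t ht => hasDerivAt_rpow_const (Or.inl (ne_of_gt ht))
  have hE : ∀ t ∈ Ioi (0 : ℝ), HasDerivAt E (E t * (-1 + x / t ^ 2)) t := by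
    intro t (ht : 0 < t)
    have hexponent : HasDerivAt (fun t : ℝ => -t - x / t) (-1 + x / t ^ 2) t :=
      ((hasDerivAt_id t).neg.sub ((hasDerivAt_const t x).div (hasDerivAt_id t)
        ht.ne')).congr_deriv (by simp only [id_eq, zero_mul, mul_one, zero_sub]; ring)
    exact hexponent.exp
  have hEq : EqOn (fun t => ν * t ^ (ν - 1) * E t + t ^ ν * (E t * (-1 + x / t ^ 2)))
      (fun t => ν * (t ^ (ν - 1) * E t) - t ^ (ν + 1 - 1) * E t
        + x * (t ^ (ν - 1 - 1) * E t)) (Ioi 0) := by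
    intro t (ht : 0 < t)
    simp only [add_sub_cancel_right, rpow_sub_one ht.ne']
    field_simp
    ring
  have hI := fun a => integrableOn_rpow_mul_exp_neg_sub_div a hx
  have hint : IntegrableOn (fun t => ν * (t ^ (ν - 1) * E t) - t ^ (ν + 1 - 1) * E t
      + x * (t ^ (ν - 1 - 1) * E t)) (Ioi 0) :=
    (((hI (ν - 1)).const_mul ν).sub (hI (ν + 1 - 1))).add ((hI (ν - 1 - 1)).const_mul x)
  have hparts := integral_Ioi_deriv_mul_eq_sub hu hE (hint.congr_fun hEq.symm measurableSet_Ioi)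
    (tendsto_rpow_mul_exp_neg_sub_div_nhdsGT_zero ν hx)
    (tendsto_rpow_mul_exp_neg_sub_div_atTop ν hx.le)
  rw [setIntegral_congr_fun measurableSet_Ioi hEq, integral_add ?_ ((hI _).const_mul x),
    integral_sub ((hI _).const_mul ν) (hI _), integral_const_mul, integral_const_mul] at hparts
  · simp only [rho]
    linarith
  · exact ((hI _).const_mul ν).sub (hI _)

lemma contDiffOn_rho (ν : ℝ) : ContDiffOn ℝ ∞ (rho ν) (Ioi 0) := by
  refine contDiffOn_infty.2 fun n => ?_
  induction n generalizing ν with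
  | zero =>
    exact contDiffOn_zero.2 fun y hy => (hasDerivAt_rho ν hy).continuousAt.continuousWithinAt
  | succ k ih =>
    rw [Nat.cast_succ]
    refine (contDiffOn_succ_iff_deriv_of_isOpen isOpen_Ioi).2 ⟨fun y hy =>
      (hasDerivAt_rho ν hy).differentiableAt.differentiableWithinAt, by simp, ?_⟩
    exact (ih (ν - 1)).neg.congr fun y hy => (hasDerivAt_rho ν hy).deriv

lemma contDiffAt_rpow_mul_rho (c ν : ℝ) {x : ℝ} (hx : 0 < x) :
    ContDiffAt ℝ ∞ (fun y => y ^ c * rho ν y) x :=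
  (contDiffAt_rpow_const_of_ne hx.ne').mul ((contDiffOn_rho ν).contDiffAt (Ioi_mem_nhds hx))

lemma hasDerivAt_rpow_mul_rho (c ν : ℝ) {x : ℝ} (hx : 0 < x) :
    HasDerivAt (fun y => y ^ c * rho ν y)
      ((c + ν) * (x ^ (c - 1) * rho ν x) - x ^ (c - 1) * rho (ν + 1) x) x := by
  refine ((hasDerivAt_rpow_const (Or.inl hx.ne')).mul (hasDerivAt_rho ν hx)).congr_deriv ?_
  rw [rho_add_one ν hx, rpow_sub_one hx.ne']
  field_simp
  ring

lemma iteratedDeriv_id_mul {𝕜 : Type*} [NontriviallyNormedField 𝕜] {f : 𝕜 → 𝕜} {x : 𝕜} {n : ℕ}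
    (hf : ContDiffAt 𝕜 n f x) :
    iteratedDeriv n (fun y => y * f y) x
      = x * iteratedDeriv n f x + n * iteratedDeriv (n - 1) f x := by
  rw [show (fun y => y * f y) = id * f from rfl, iteratedDeriv_mul contDiffAt_id hf]
  cases n with
  | zero => simp
  | succ k =>
    rw [Finset.sum_range_succ', Finset.sum_range_succ']
    simp only [iteratedDeriv_id, Nat.add_eq_zero_iff, one_ne_zero, and_false, and_self,
      ↓reduceIte, Nat.add_eq_right, mul_zero, Nat.reduceSubDiff, zero_mul, Finset.sum_const_zero,
      zero_add, Nat.choose_one_right, Nat.cast_add, Nat.cast_one, mul_one, add_tsub_cancel_right,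
      Nat.choose_zero_right, one_mul, tsub_zero]
    ring

lemma iteratedDeriv_rpow_add_one_mul_rho (k : ℕ) (c ν : ℝ) {x : ℝ} (hx : 0 < x) :
    iteratedDeriv k (fun y => y ^ (c + 1) * rho ν y) x
      = x * iteratedDeriv k (fun y => y ^ c * rho ν y) x
        + k * iteratedDeriv (k - 1) (fun y => y ^ c * rho ν y) x := by
  have hmul : (fun y => y ^ (c + 1) * rho ν y) =ᶠ[𝓝 x] fun y => y * (y ^ c * rho ν y) := by
    filter_upwards [Ioi_mem_nhds hx] with y (hy : 0 < y)
    rw [rpow_add_one hy.ne']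
    ring
  rw [hmul.iteratedDeriv_eq, iteratedDeriv_id_mul ((contDiffAt_rpow_mul_rho c ν hx).of_le
    (mod_cast le_top))]

lemma iteratedDeriv_succ_rpow_mul_rho (k : ℕ) (c ν : ℝ) {x : ℝ} (hx : 0 < x) :
    iteratedDeriv (k + 1) (fun y => y ^ c * rho ν y) x
      = (c + ν) * iteratedDeriv k (fun y => y ^ (c - 1) * rho ν y) x
        - iteratedDeriv k (fun y => y ^ (c - 1) * rho (ν + 1) y) x := by
  have hderiv : deriv (fun y => y ^ c * rho ν y) =ᶠ[𝓝 x]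
      fun y => (c + ν) * (y ^ (c - 1) * rho ν y) - y ^ (c - 1) * rho (ν + 1) y := by
    filter_upwards [Ioi_mem_nhds hx] with y hy using (hasDerivAt_rpow_mul_rho c ν hy).deriv
  have hsmooth := fun ν => (contDiffAt_rpow_mul_rho (c - 1) ν hx).of_le (m := k) (mod_cast le_top)
  rw [iteratedDeriv_succ', hderiv.iteratedDeriv_eq,
    iteratedDeriv_fun_sub (contDiffAt_const.mul (hsmooth ν)) (hsmooth (ν + 1)),
    iteratedDeriv_const_mul _ (hsmooth ν)]

lemma S_eq_iteratedDeriv (k : ℕ) (ν α : ℝ) {c : ℝ} (hc : (k : ℝ) + α = c) (x : ℝ) :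
    S k ν α x = iteratedDeriv k (fun y => y ^ c * rho ν y) x := by
  subst hc
  rw [iteratedDeriv_eq_iterate]
  rfl

theorem S_recurrence_general (ν α : ℝ) (n : ℕ) (x : ℝ) (hx : 0 < x) :
    S (n + 1) ν α x = (2 * n + 1 + ν + α) * S n ν α x
      - n * (n + ν + α) * S (n - 1) ν α x - x * S n (ν + 1) (α - 1) x := by
  have hLeibniz_succ := iteratedDeriv_rpow_add_one_mul_rho (n + 1) (n + α) ν hx
  have hderiv := iteratedDeriv_succ_rpow_mul_rho n (n + α) ν hx
  have hLeibniz := iteratedDeriv_rpow_add_one_mul_rho n (n + α - 1) ν hx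
  -- At `n = 0` the truncated `n - 1` is harmless: both sides carry the factor `n`.
  have hprev : (n : ℝ) * iteratedDeriv (n - 1) (fun y => y ^ (n + α - 1) * rho ν y) x
      = n * S (n - 1) ν α x := by
    rcases n with _ | m
    · simp
    · rw [Nat.add_sub_cancel,
        S_eq_iteratedDeriv m ν α (c := (m + 1 : ℕ) + α - 1) (by push_cast; ring)]
  rw [Nat.add_sub_cancel, Nat.cast_succ] at hLeibniz_succ
  rw [sub_add_cancel] at hLeibniz
  rw [S_eq_iteratedDeriv (n + 1) ν α (c := n + α + 1) (by push_cast; ring),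
    S_eq_iteratedDeriv n ν α rfl, S_eq_iteratedDeriv n (ν + 1) (α - 1) (c := n + α - 1) (by ring)]
  linear_combination hLeibniz_succ + x * hderiv - (n + α + ν) * hLeibniz - (n + α + ν) * hprev

theorem S_recurrence (ν α : ℝ) (n : ℕ) (hn : 1 ≤ n) (x : ℝ) (hx : 0 < x) :
    S (n + 1) ν α x = (2 * n + 1 + ν + α) * S n ν α x
      - n * (n + ν + α) * S (n - 1) ν α x - x * S n (ν + 1) (α - 1) x :=
  S_recurrence_general ν α n x hx
end

section
/- Let ν ≥ 0, α > −1, n ∈ ℕ, and let P(x) = Σ_{k=0}^n a_k x^k be a real polynomial satisfying ∫₀^∞ P(x) x^{m+α} ρ_ν(x) dx = 0 for m = 0, 1, …, n−1. Define the associated polynomial Q(t) = Σ_{k=0}^n a_k (−1)^k k! t^k L_k^ν(t). Then ∫₀^∞ t^{ν+α+m} e^{-t} Q(t) dt = 0 for every m = 0, 1, …, n−1. -/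
/-!
The Mellin transform of `ρ_ν` is `∫₀^∞ x^(s-1) ρ_ν(x) dx = Γ(s) Γ(s+ν)` (Fubini on the defining
double integral), so with `w = m + α` the hypothesis says `∑ₖ aₖ Γ(k+w+1) Γ(k+w+1+ν) = 0`.
Integrating the Laguerre coefficients termwise against `t^β e^(-t)` and summing them by the
Chu–Vandermonde identity gives `∫₀^∞ t^β e^(-t) L_k^ν(t) dt = Γ(β+1) (ν-β)_k / k!`; at
`β = ν + w + k` the `k`-th term of `Q` therefore contributes `aₖ Γ(k+w+1) Γ(k+w+1+ν) / Γ(w+1)`,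
and the `m`-th moment of `Q` is the vanishing sum above divided by `Γ(w+1)`.
-/

open MeasureTheory Real Set

/-- The generalized (associated) Laguerre polynomial `L_n^ν`. -/
noncomputable def laguerre (n : ℕ) (ν : ℝ) (t : ℝ) : ℝ :=
  ∑ k ∈ Finset.range (n + 1), ((-1 : ℝ) ^ k / k.factorial) *
    (Real.Gamma (n + ν + 1) / (Real.Gamma (k + ν + 1) * (n - k).factorial)) * t ^ k

open Finset Polynomial

theorem descPochhammer_eval_add {R : Type*} [CommRing R] (r s : R) (k : ℕ) :
    (descPochhammer R k).eval (r + s) = ∑ j ∈ range (k + 1),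
      k.choose j * ((descPochhammer R j).eval r * (descPochhammer R (k - j)).eval s) := by
  have h (n : ℕ) (x : R) : (descPochhammer R n).eval x = (descPochhammer ℤ n).smeval x := by
    rw [← aeval_eq_smeval, aeval_def, ← eval_map, descPochhammer_map]
  simp only [h]
  rw [Ring.descPochhammer_smeval_add k (Commute.all r s),
    Nat.sum_antidiagonal_eq_sum_range_succ (fun i j => (k.choose i : R) *
      ((descPochhammer ℤ i).smeval r * (descPochhammer ℤ j).smeval s))]

theorem Real.Gamma_add_nat_eq_mul_ascPochhammer {x : ℝ} (hx : 0 < x) (n : ℕ) :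
    Gamma (x + n) = Gamma x * (ascPochhammer ℝ n).eval x := by
  induction n with
  | zero => simp
  | succ n ih =>
    rw [Nat.cast_succ, ← add_assoc, Gamma_add_one (by positivity), ih, ascPochhammer_succ_eval]
    ring

theorem sum_laguerre_coeff_mul_Gamma {ν β : ℝ} (hν : -1 < ν) (hβ : -1 < β) (k : ℕ) :
    ∑ j ∈ range (k + 1), (-1 : ℝ) ^ j / j.factorial *
        (Gamma (k + ν + 1) / (Gamma (j + ν + 1) * (k - j).factorial)) * Gamma (β + j + 1) =
      Gamma (β + 1) * (ascPochhammer ℝ k).eval (ν - β) / k.factorial := by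
  have hterm : ∀ j ∈ range (k + 1), (-1 : ℝ) ^ j / j.factorial *
        (Gamma (k + ν + 1) / (Gamma (j + ν + 1) * (k - j).factorial)) * Gamma (β + j + 1) =
      Gamma (β + 1) / k.factorial * (k.choose j *
        ((descPochhammer ℝ j).eval (-(β + 1)) * (descPochhammer ℝ (k - j)).eval (ν + k))) := by
    intro j hj
    have hjk : j ≤ k := Nat.lt_succ_iff.mp (mem_range.mp hj)
    have hβj : Gamma (β + j + 1) =
        (-1) ^ j * Gamma (β + 1) * (descPochhammer ℝ j).eval (-(β + 1)) := by
      rw [add_right_comm, Gamma_add_nat_eq_mul_ascPochhammer (by linarith), ← neg_neg (β + 1),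
        ascPochhammer_eval_neg_eq_descPochhammer, neg_neg]
      ring
    have hνk :
        Gamma (k + ν + 1) = Gamma (j + ν + 1) * (descPochhammer ℝ (k - j)).eval (ν + k) := by
      have harg : ν + k - ((k - j : ℕ) : ℝ) + 1 = j + ν + 1 := by
        rw [Nat.cast_sub hjk]; ring
      rw [descPochhammer_eval_eq_ascPochhammer, harg,
        ← Gamma_add_nat_eq_mul_ascPochhammer (by linarith), Nat.cast_sub hjk]
      ring_nf
    have hfact : (k.factorial : ℝ) = k.choose j * j.factorial * (k - j).factorial := by
      exact_mod_cast (Nat.choose_mul_factorial_mul_factorial hjk).symm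
    have hG : Gamma (j + ν + 1) ≠ 0 :=
      (Gamma_pos_of_pos (by linarith [(j.cast_nonneg : (0 : ℝ) ≤ j)])).ne'
    have hC : (k.choose j : ℝ) ≠ 0 := Nat.cast_ne_zero.mpr (Nat.choose_pos hjk).ne'
    have hsign : ((-1 : ℝ) ^ j) ^ 2 = 1 := by rw [← pow_mul, pow_mul', neg_one_sq, one_pow]
    rw [hβj, hνk, hfact]
    field_simp
    rw [hsign]
    ring
  rw [sum_congr rfl hterm, ← mul_sum, ← descPochhammer_eval_add,
    descPochhammer_eval_eq_ascPochhammer]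
  ring_nf

theorem rpow_mul_exp_neg_mul_sum_pow_eq {β t : ℝ} (ht : 0 < t) (c : ℕ → ℝ) (s : Finset ℕ) :
    t ^ β * exp (-t) * ∑ j ∈ s, c j * t ^ j =
      ∑ j ∈ s, c j * (exp (-t) * t ^ ((β + j + 1) - 1)) := by
  rw [mul_sum]
  refine sum_congr rfl fun j _ => ?_
  rw [add_sub_cancel_right, rpow_add ht, rpow_natCast]
  ring

theorem integrableOn_rpow_mul_exp_neg_mul_sum_pow {β : ℝ} (hβ : -1 < β) (c : ℕ → ℝ)
    (s : Finset ℕ) : IntegrableOn (fun t => t ^ β * exp (-t) * ∑ j ∈ s, c j * t ^ j) (Ioi 0) := by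
  have hpos (j : ℕ) : 0 < β + j + 1 := by linarith [(j.cast_nonneg : (0 : ℝ) ≤ j)]
  refine IntegrableOn.congr_fun ?_ (fun t ht => (rpow_mul_exp_neg_mul_sum_pow_eq ht c s).symm)
    measurableSet_Ioi
  exact integrable_finsetSum s fun j _ => (GammaIntegral_convergent (hpos j)).const_mul (c j)

theorem integral_rpow_mul_exp_neg_mul_sum_pow {β : ℝ} (hβ : -1 < β) (c : ℕ → ℝ) (s : Finset ℕ) :
    ∫ t in Ioi 0, t ^ β * exp (-t) * ∑ j ∈ s, c j * t ^ j = ∑ j ∈ s, c j * Gamma (β + j + 1) := by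
  have hpos (j : ℕ) : 0 < β + j + 1 := by linarith [(j.cast_nonneg : (0 : ℝ) ≤ j)]
  rw [setIntegral_congr_fun measurableSet_Ioi fun t ht => rpow_mul_exp_neg_mul_sum_pow_eq ht c s,
    integral_finsetSum s fun j _ => (GammaIntegral_convergent (hpos j)).const_mul (c j)]
  simp only [integral_const_mul, ← Gamma_eq_integral (hpos _)]

theorem integral_rpow_mul_exp_neg_mul_laguerre {ν β : ℝ} (hν : -1 < ν) (hβ : -1 < β) (k : ℕ) :
    ∫ t in Ioi 0, t ^ β * exp (-t) * laguerre k ν t =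
      Gamma (β + 1) * (ascPochhammer ℝ k).eval (ν - β) / k.factorial := by
  unfold laguerre
  rw [integral_rpow_mul_exp_neg_mul_sum_pow hβ, sum_laguerre_coeff_mul_Gamma hν hβ]

theorem integrableOn_rpow_mul_exp_neg_mul_laguerre {β : ℝ} (hβ : -1 < β) (k : ℕ) (ν : ℝ) :
    IntegrableOn (fun t => t ^ β * exp (-t) * laguerre k ν t) (Ioi 0) :=
  integrableOn_rpow_mul_exp_neg_mul_sum_pow hβ _ _

theorem integral_rpow_mul_rho_kernel {ν s t : ℝ} (hs : 0 < s) (ht : 0 < t) :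
    ∫ x in Ioi 0, x ^ (s - 1) * (t ^ (ν - 1) * exp (-t - x / t)) =
      Gamma s * (exp (-t) * t ^ (s + ν - 1)) := by
  have hsplit (x : ℝ) : x ^ (s - 1) * (t ^ (ν - 1) * exp (-t - x / t)) =
      t ^ (ν - 1) * exp (-t) * (x ^ (s - 1) * exp (-(t⁻¹ * x))) := by
    rw [show -t - x / t = -t + -(t⁻¹ * x) by ring, exp_add]; ring
  simp_rw [hsplit]
  rw [integral_const_mul, integral_rpow_mul_exp_neg_mul_Ioi hs (inv_pos.mpr ht), one_div, inv_inv,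
    show s + ν - 1 = (ν - 1) + s by ring, rpow_add ht]
  ring

theorem integrableOn_rpow_mul_rho_kernel {ν s t : ℝ} (hs : 0 < s) (ht : 0 < t) :
    IntegrableOn (fun x => x ^ (s - 1) * (t ^ (ν - 1) * exp (-t - x / t))) (Ioi 0) := by
  have h := (integrableOn_rpow_mul_exp_neg_mul_rpow (s := s - 1) (p := 1) (by linarith) one_pos
    (inv_pos.mpr ht)).const_mul (t ^ (ν - 1) * exp (-t))
  refine IntegrableOn.congr_fun h (fun x _ => ?_) measurableSet_Ioi
  rw [rpow_one, show -t - x / t = -t + -t⁻¹ * x by ring, exp_add]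
  ring

theorem integrable_rpow_mul_rho_kernel_prod {ν s : ℝ} (hs : 0 < s) (hsν : 0 < s + ν) :
    Integrable (fun p : ℝ × ℝ => p.1 ^ (s - 1) * (p.2 ^ (ν - 1) * exp (-p.2 - p.1 / p.2)))
      ((volume.restrict (Ioi 0)).prod (volume.restrict (Ioi 0))) := by
  rw [integrable_prod_iff' (by fun_prop)]
  constructor
  · filter_upwards [ae_restrict_mem measurableSet_Ioi] with t ht
    exact integrableOn_rpow_mul_rho_kernel hs ht
  · refine IntegrableOn.congr_fun ((GammaIntegral_convergent hsν).const_mul (Gamma s))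
      (fun t ht => ?_) measurableSet_Ioi
    rw [← integral_rpow_mul_rho_kernel hs ht]
    refine setIntegral_congr_fun measurableSet_Ioi fun x hx => ?_
    exact (norm_of_nonneg (mul_nonneg (rpow_nonneg (le_of_lt hx) _)
      (mul_nonneg (rpow_nonneg (le_of_lt ht) _) (exp_pos _).le))).symm

theorem integral_rpow_mul_rho {ν s : ℝ} (hs : 0 < s) (hsν : 0 < s + ν) :
    ∫ x in Ioi 0, x ^ (s - 1) * rho ν x = Gamma s * Gamma (s + ν) := by
  simp_rw [rho, ← integral_const_mul]
  rw [integral_integral_swap (integrable_rpow_mul_rho_kernel_prod hs hsν),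
    setIntegral_congr_fun measurableSet_Ioi fun t ht => integral_rpow_mul_rho_kernel hs ht,
    integral_const_mul, Gamma_eq_integral hsν]

theorem integrableOn_rpow_mul_rho {ν s : ℝ} (hs : 0 < s) (hsν : 0 < s + ν) :
    IntegrableOn (fun x => x ^ (s - 1) * rho ν x) (Ioi 0) := by
  simp_rw [rho, ← integral_const_mul]
  exact (integrable_rpow_mul_rho_kernel_prod hs hsν).integral_prod_left

theorem integral_sum_pow_mul_rpow_mul_rho {ν w : ℝ} (hw : -1 < w) (hνw : -1 < ν + w)
    (a : ℕ → ℝ) (s : Finset ℕ) :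
    ∫ x in Ioi 0, (∑ k ∈ s, a k * x ^ k) * x ^ w * rho ν x =
      ∑ k ∈ s, a k * (Gamma (k + w + 1) * Gamma (k + w + 1 + ν)) := by
  have hs (k : ℕ) : 0 < k + w + 1 := by linarith [(k.cast_nonneg : (0 : ℝ) ≤ k)]
  have hsν (k : ℕ) : 0 < k + w + 1 + ν := by linarith [(k.cast_nonneg : (0 : ℝ) ≤ k)]
  have hpt : ∀ x ∈ Ioi (0 : ℝ), (∑ k ∈ s, a k * x ^ k) * x ^ w * rho ν x =
      ∑ k ∈ s, a k * (x ^ ((k + w + 1) - 1) * rho ν x) := by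
    intro x hx
    simp_rw [add_sub_cancel_right, rpow_add hx, rpow_natCast, sum_mul]
    exact sum_congr rfl fun k _ => by ring
  rw [setIntegral_congr_fun measurableSet_Ioi hpt,
    integral_finsetSum s fun k _ => (integrableOn_rpow_mul_rho (hs k) (hsν k)).const_mul (a k)]
  simp only [integral_const_mul, integral_rpow_mul_rho (hs _) (hsν _)]

theorem integral_rpow_mul_exp_neg_mul_sum_laguerre {ν w : ℝ} (hν : -1 < ν) (hw : -1 < w)
    (hνw : -1 < ν + w) (a : ℕ → ℝ) (s : Finset ℕ) :
    ∫ t in Ioi 0, t ^ (ν + w) * exp (-t) *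
        ∑ k ∈ s, a k * (-1) ^ k * k.factorial * t ^ k * laguerre k ν t =
      (∑ k ∈ s, a k * (Gamma (k + w + 1) * Gamma (k + w + 1 + ν))) / Gamma (w + 1) := by
  have hβ (k : ℕ) : -1 < ν + w + k := by linarith [(k.cast_nonneg : (0 : ℝ) ≤ k)]
  have hpt : ∀ t ∈ Ioi (0 : ℝ), t ^ (ν + w) * exp (-t) *
        ∑ k ∈ s, a k * (-1) ^ k * k.factorial * t ^ k * laguerre k ν t =
      ∑ k ∈ s, a k * (-1) ^ k * k.factorial * (t ^ (ν + w + k) * exp (-t) * laguerre k ν t) := by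
    intro t ht
    simp_rw [rpow_add ht, rpow_natCast, mul_sum]
    exact sum_congr rfl fun k _ => by ring
  have hk (k : ℕ) : a k * (-1) ^ k * k.factorial *
        (Gamma (ν + w + k + 1) * (ascPochhammer ℝ k).eval (ν - (ν + w + k)) / k.factorial) =
      a k * (Gamma (k + w + 1) * Gamma (k + w + 1 + ν)) / Gamma (w + 1) := by
    have hpoch : (ascPochhammer ℝ k).eval (ν - (ν + w + k)) =
        (-1) ^ k * (Gamma (w + 1 + k) / Gamma (w + 1)) := by
      rw [show ν - (ν + w + k) = -(w + k) by ring, ascPochhammer_eval_neg_eq_descPochhammer,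
        descPochhammer_eval_eq_ascPochhammer, show w + k - k + 1 = w + 1 by ring,
        Gamma_add_nat_eq_mul_ascPochhammer (by linarith)]
      field_simp [(Gamma_pos_of_pos (show 0 < w + 1 by linarith)).ne']
    have hsign : ((-1 : ℝ) ^ k) ^ 2 = 1 := by rw [← pow_mul, pow_mul', neg_one_sq, one_pow]
    rw [hpoch]
    field_simp
    rw [hsign]
    ring_nf
  rw [setIntegral_congr_fun measurableSet_Ioi hpt, integral_finsetSum s fun k _ =>
      (integrableOn_rpow_mul_exp_neg_mul_laguerre (hβ k) k ν).const_mul _, sum_div]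
  simp only [integral_const_mul, integral_rpow_mul_exp_neg_mul_laguerre hν (hβ _)]
  exact sum_congr rfl fun k _ => hk k

theorem associated_polynomial_moments_vanish_general
    (ν α : ℝ) (hν : 0 ≤ ν) (hα : -1 < α) (n : ℕ) (a : ℕ → ℝ)
    (horth : ∀ m < n,
      ∫ x in Ioi (0:ℝ),
        (∑ k ∈ Finset.range (n + 1), a k * x ^ k) * x ^ ((m : ℝ) + α) * rho ν x = 0) :
    ∀ m < n,
      ∫ t in Ioi (0:ℝ), t ^ (ν + α + (m : ℝ)) * Real.exp (-t) *
        (∑ k ∈ Finset.range (n + 1),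
          a k * (-1 : ℝ) ^ k * k.factorial * t ^ k * laguerre k ν t) = 0 := by
  intro m hm
  have hw : -1 < (m : ℝ) + α := by linarith [(m.cast_nonneg : (0 : ℝ) ≤ m)]
  rw [show ν + α + m = ν + (m + α) by ring,
    integral_rpow_mul_exp_neg_mul_sum_laguerre (by linarith) hw (by linarith),
    ← integral_sum_pow_mul_rpow_mul_rho hw (by linarith), horth m hm, zero_div]

theorem associated_polynomial_moments_vanish
    (ν α : ℝ) (hν : 0 ≤ ν) (hα : -1 < α) (n : ℕ) (hn : 1 ≤ n) (a : ℕ → ℝ)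
    (horth : ∀ m < n,
      ∫ x in Ioi (0:ℝ),
        (∑ k ∈ Finset.range (n + 1), a k * x ^ k) * x ^ ((m : ℝ) + α) * rho ν x = 0) :
    ∀ m < n,
      ∫ t in Ioi (0:ℝ), t ^ (ν + α + (m : ℝ)) * Real.exp (-t) *
        (∑ k ∈ Finset.range (n + 1),
          a k * (-1 : ℝ) ^ k * k.factorial * t ^ k * laguerre k ν t) = 0 :=
  associated_polynomial_moments_vanish_general ν α hν hα n a horth
end
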